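/- Let c > 0. There exists a constant C₆ = C₆(c,α,d) > 0 such that for every bounded measurable function F : ℝ^d×ℝ^d → [0,∞), every t ∈ (0,1] and all x, y ∈ ℝ^d with |x−y| > t^{1/2}, ∫₀^t ∫_{U_{x,y}} Γ_c(t−s; x−z)·η(s; w−y)·F(z,w)/|z−w|^{d+α} dz dw ds ≤ C₆·( Γ_c(t; x−y)·∫₀^t ∫_{U_{x,y}} η(s; w−y)·F(z,w)/|z−w|^{d+α} dz dw ds + η(t; x−y)·∫₀^t ∫_{U_{x,y}} Γ_c(s; x−z)·F(z,w)/|z−w|^{d+α} dz dw ds ). -/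

import Mathlib

open MeasureTheory Set ENNReal

noncomputable def Gam (d : ℕ) (lam t : ℝ) (x : EuclideanSpace ℝ (Fin d)) : ℝ :=
  t ^ (-(d : ℝ) / 2) * Real.exp (-lam * ‖x‖ ^ 2 / t)

noncomputable def eta (d : ℕ) (α t : ℝ) (x : EuclideanSpace ℝ (Fin d)) : ℝ :=
  t / (t ^ ((1 : ℝ) / 2) + ‖x‖) ^ ((d : ℝ) + α)

def Vset (d : ℕ) (x y : EuclideanSpace ℝ (Fin d)) :
    Set (EuclideanSpace ℝ (Fin d) × EuclideanSpace ℝ (Fin d)) :=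
  {zw | 4 * min ‖y - zw.2‖ ‖x - zw.1‖ ≤ ‖x - y‖}

def Uset (d : ℕ) (x y : EuclideanSpace ℝ (Fin d)) :
    Set (EuclideanSpace ℝ (Fin d) × EuclideanSpace ℝ (Fin d)) :=
  (Vset d x y)ᶜ

lemma eta_key (d : ℕ) (α t s : ℝ) (hα1 : 0 < α)
    (x y w : EuclideanSpace ℝ (Fin d))
    (ht : 0 < t) (hs : 0 < s) (hst : s ≤ t)
    (hr : t ^ ((1:ℝ)/2) < ‖x - y‖) (hρ : ‖x - y‖ < 4 * ‖w - y‖) :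
    eta d α s (w - y) ≤ 8 ^ ((d:ℝ) + α) * eta d α t (x - y) := by
  set p : ℝ := (d:ℝ) + α with hp
  have hppos : 0 < p := by positivity
  set r : ℝ := ‖x - y‖ with hrdef
  set ρ : ℝ := ‖w - y‖ with hρdef
  have hr0 : 0 < r := lt_of_le_of_lt (Real.rpow_nonneg ht.le _) hr
  have hρ0 : 0 < ρ := by nlinarith
  have hs2 : (0:ℝ) ≤ s ^ ((1:ℝ)/2) := Real.rpow_nonneg hs.le _
  have h1 : eta d α s (w - y) ≤ s / ρ ^ p := by
    unfold eta
    rw [hρdef]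
    apply div_le_div_of_nonneg_left hs.le (by positivity)
    exact Real.rpow_le_rpow hρ0.le (by linarith) hppos.le
  have h2 : s / ρ ^ p ≤ t / (r / 4) ^ p := by
    apply div_le_div₀ ht.le hst (by positivity) ?_
    exact Real.rpow_le_rpow (by positivity) (by linarith) hppos.le
  have h3 : t / (r / 4) ^ p = 4 ^ p * t / r ^ p := by
    rw [Real.div_rpow hr0.le (by norm_num : (0:ℝ) ≤ 4)]
    field_simp
  have h4 : 8 ^ p * eta d α t (x - y) ≥ 4 ^ p * t / r ^ p := by
    unfold eta
    rw [← hrdef]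
    have hden : (t ^ ((1:ℝ)/2) + r) ^ p ≤ (2 * r) ^ p :=
      Real.rpow_le_rpow (by positivity) (by linarith) hppos.le
    have hden0 : 0 < (t ^ ((1:ℝ)/2) + r) ^ p := by positivity
    have h2r : (2 * r) ^ p = 2 ^ p * r ^ p := Real.mul_rpow (by norm_num) hr0.le
    have h8 : (8:ℝ) ^ p = 2 ^ p * 4 ^ p := by
      rw [← Real.mul_rpow (by norm_num) (by norm_num)]; norm_num
    have : t / (2 ^ p * r ^ p) ≤ t / (t ^ ((1:ℝ)/2) + r) ^ p := by
      apply div_le_div_of_nonneg_left ht.le hden0 (by rw [← h2r]; exact hden)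
    calc 4 ^ p * t / r ^ p = 8 ^ p * (t / (2 ^ p * r ^ p)) := by
          rw [h8]; field_simp
      _ ≤ 8 ^ p * (t / (t ^ ((1:ℝ)/2) + r) ^ p) := by
          apply mul_le_mul_of_nonneg_left this (by positivity)
  calc eta d α s (w - y) ≤ s / ρ ^ p := h1
    _ ≤ t / (r / 4) ^ p := h2
    _ = 4 ^ p * t / r ^ p := h3
    _ ≤ 8 ^ p * eta d α t (x - y) := h4

lemma gam_nonneg (d : ℕ) (c u : ℝ) (hu : 0 ≤ u) (v : EuclideanSpace ℝ (Fin d)) :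
    0 ≤ Gam d c u v :=
  mul_nonneg (Real.rpow_nonneg hu _) (Real.exp_nonneg _)

lemma uset_measurable (d : ℕ) (x y : EuclideanSpace ℝ (Fin d)) :
    MeasurableSet (Uset d x y) := by
  apply MeasurableSet.compl
  apply measurableSet_le ?_ measurable_const
  apply Measurable.mul measurable_const
  exact ((measurable_const.sub measurable_snd).norm.min
    (measurable_const.sub measurable_fst).norm)

/-- generalized 3P inequality mixing Γ and η on U_{x,y}, case |x-y| > √t. -/
theorem stmt12 (d : ℕ) (hd : 2 ≤ d) (α : ℝ) (hα1 : 0 < α) (hα2 : α < 2)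
    (c : ℝ) (hc : 0 < c) :
    ∃ C₆ : ℝ, 0 < C₆ ∧
      ∀ (F : EuclideanSpace ℝ (Fin d) → EuclideanSpace ℝ (Fin d) → ℝ),
        Measurable (Function.uncurry F) → (∀ z w, 0 ≤ F z w) →
        (∃ B : ℝ, ∀ z w, F z w ≤ B) →
        ∀ t ∈ Set.Ioc (0 : ℝ) 1, ∀ x y : EuclideanSpace ℝ (Fin d),
          t ^ ((1 : ℝ) / 2) < ‖x - y‖ →
          (∫⁻ s in Set.Ioc (0 : ℝ) t,
              ∫⁻ zw in Uset d x y,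
                ENNReal.ofReal (Gam d c (t - s) (x - zw.1) * eta d α s (zw.2 - y) *
                  F zw.1 zw.2 / ‖zw.1 - zw.2‖ ^ ((d : ℝ) + α)))
            ≤ ENNReal.ofReal C₆ *
                (ENNReal.ofReal (Gam d c t (x - y)) *
                    (∫⁻ s in Set.Ioc (0 : ℝ) t,
                      ∫⁻ zw in Uset d x y,
                        ENNReal.ofReal (eta d α s (zw.2 - y) *
                          F zw.1 zw.2 / ‖zw.1 - zw.2‖ ^ ((d : ℝ) + α)))
                  + ENNReal.ofReal (eta d α t (x - y)) *
                    (∫⁻ s in Set.Ioc (0 : ℝ) t,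
                      ∫⁻ zw in Uset d x y,
                        ENNReal.ofReal (Gam d c s (x - zw.1) *
                          F zw.1 zw.2 / ‖zw.1 - zw.2‖ ^ ((d : ℝ) + α)))) := by
  refine ⟨8 ^ ((d:ℝ) + α), by positivity, ?_⟩
  intro F hFm hF0 hFb t ht x y hxy
  obtain ⟨ht0, ht1⟩ := ht
  set p : ℝ := (d:ℝ) + α with hp
  set K : ℝ := (8:ℝ) ^ p with hKdef
  have hK0 : (0:ℝ) ≤ K := by positivity
  have hη : 0 ≤ eta d α t (x - y) := by
    unfold eta
    have : (0:ℝ) ≤ (t ^ ((1:ℝ)/2) + ‖x - y‖) ^ p :=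
      Real.rpow_nonneg (by positivity) _
    exact div_nonneg ht0.le this
  have hU : MeasurableSet (Uset d x y) := uset_measurable d x y
  set G : ℝ → ℝ≥0∞ := fun u =>
    ∫⁻ zw in Uset d x y,
      ENNReal.ofReal (Gam d c u (x - zw.1) * F zw.1 zw.2 / ‖zw.1 - zw.2‖ ^ p) with hGdef
  -- Step A+B : bound LHS by ofReal (K*η) * ∫ G(t-s)
  have stepB :
      (∫⁻ s in Set.Ioc (0 : ℝ) t,
          ∫⁻ zw in Uset d x y,
            ENNReal.ofReal (Gam d c (t - s) (x - zw.1) * eta d α s (zw.2 - y) *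
              F zw.1 zw.2 / ‖zw.1 - zw.2‖ ^ p))
        ≤ ENNReal.ofReal (K * eta d α t (x - y)) *
            ∫⁻ s in Set.Ioc (0 : ℝ) t, G (t - s) := by
    rw [← lintegral_const_mul' _ _ ENNReal.ofReal_ne_top]
    refine lintegral_mono_ae ((ae_restrict_iff' measurableSet_Ioc).mpr (ae_of_all _ ?_))
    intro s hs
    rw [hGdef]
    simp only []
    rw [← lintegral_const_mul' _ _ ENNReal.ofReal_ne_top]
    refine lintegral_mono_ae ((ae_restrict_iff' hU).mpr (ae_of_all _ ?_))
    intro zw hzw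
    rw [← ENNReal.ofReal_mul (mul_nonneg hK0 hη)]
    apply ENNReal.ofReal_le_ofReal
    have hρ : ‖x - y‖ < 4 * ‖zw.2 - y‖ := by
      have h' : ¬ (4 * min ‖y - zw.2‖ ‖x - zw.1‖ ≤ ‖x - y‖) := hzw
      push_neg at h'
      calc ‖x - y‖ < 4 * min ‖y - zw.2‖ ‖x - zw.1‖ := h'
        _ ≤ 4 * ‖y - zw.2‖ := by
            apply mul_le_mul_of_nonneg_left (min_le_left _ _) (by norm_num)
        _ = 4 * ‖zw.2 - y‖ := by rw [norm_sub_rev]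
    have hbound := eta_key d α t s hα1 x y zw.2 ht0 hs.1 hs.2 hxy hρ
    have hA : 0 ≤ Gam d c (t - s) (x - zw.1) :=
      gam_nonneg d c (t - s) (sub_nonneg.mpr hs.2) _
    have hrest : 0 ≤ Gam d c (t - s) (x - zw.1) * F zw.1 zw.2 / ‖zw.1 - zw.2‖ ^ p :=
      div_nonneg (mul_nonneg hA (hF0 _ _)) (Real.rpow_nonneg (norm_nonneg _) _)
    calc Gam d c (t - s) (x - zw.1) * eta d α s (zw.2 - y) * F zw.1 zw.2 /
          ‖zw.1 - zw.2‖ ^ p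
        = eta d α s (zw.2 - y) *
            (Gam d c (t - s) (x - zw.1) * F zw.1 zw.2 / ‖zw.1 - zw.2‖ ^ p) := by
          ring
      _ ≤ (K * eta d α t (x - y)) *
            (Gam d c (t - s) (x - zw.1) * F zw.1 zw.2 / ‖zw.1 - zw.2‖ ^ p) :=
          mul_le_mul_of_nonneg_right hbound hrest
  -- Step C : substitution s ↦ t - s
  have stepC : (∫⁻ s in Set.Ioc (0 : ℝ) t, G (t - s)) =
      ∫⁻ s in Set.Ioc (0 : ℝ) t, G s := by
    have hmp : MeasurePreserving (fun s : ℝ => t - s) volume volume :=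
      Measure.measurePreserving_sub_left volume t
    have hemb : MeasurableEmbedding (fun s : ℝ => t - s) :=
      (MeasurableEquiv.subLeft t).measurableEmbedding
    rw [hmp.setLIntegral_comp_emb hemb G (Set.Ioc 0 t)]
    rw [Set.image_const_sub_Ioc]
    rw [sub_self, sub_zero, restrict_Ico_eq_restrict_Ioc]
  -- conclude
  refine le_trans stepB ?_
  rw [stepC, ENNReal.ofReal_mul hK0]
  rw [mul_assoc]
  apply mul_le_mul_of_nonneg_left _ (by positivity)
  exact le_add_self
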